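/- Let d ≥ 1 be an integer, let σ₊ > 0, σ₋ > 0 and α ∈ (0,1) be real numbers. Let μ₊ be the product probability measure on ℝ^d with i.i.d. coordinates gaussianReal 1 σ₊², and μ₋ the product probability measure with i.i.d. coordinates gaussianReal (−1) σ₋². Define the misclassification risk R(w, b) = α·μ₊({x : ⟨w, x⟩ + b < 0}) + (1−α)·μ₋({x : ⟨w, x⟩ + b > 0}) for w ∈ ℝ^d, b ∈ ℝ. If (w*, b*) with w* ≠ 0 is a global minimizer of R, i.e. R(w*, b*) ≤ R(w, b) for all w ∈ ℝ^d and b ∈ ℝ, then all coordinates of w* are equal and their common value is positive. -/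

import Mathlib

/-!
Under the product Gaussian `N(m𝟙, vI)` the score `∑ wᵢ xᵢ` is `N(m ∑ wᵢ, v ∑ wᵢ²)`, so for fixed
`∑ wᵢ²` and `b` both error terms of the risk are strictly decreasing in `∑ wᵢ`. By the equality
case of Cauchy–Schwarz, a nonzero `w` that is not a positive constant vector has a strictly smaller
coordinate sum than the constant vector with the same `∑ wᵢ²`, which therefore has smaller risk.
-/

open MeasureTheory ProbabilityTheory Real Set
open scoped NNReal

theorem sq_sum_lt_card_mul_sum_sq {ι : Type*} [Fintype ι] {w : ι → ℝ} (h : ∃ i j, w i ≠ w j) :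
    (∑ i, w i) ^ 2 < Fintype.card ι * ∑ i, w i ^ 2 := by
  obtain ⟨i, j, hij⟩ := h
  have hn : (0 : ℝ) < Fintype.card ι := by exact_mod_cast Fintype.card_pos_iff.2 ⟨i⟩
  set a := (∑ k, w k) / Fintype.card ι
  have hdev : 0 < ∑ k, (w k - a) ^ 2 := by
    obtain ⟨k, hk⟩ : ∃ k, w k ≠ a := by
      by_contra! h
      exact hij ((h i).trans (h j).symm)
    exact Finset.sum_pos' (fun _ _ ↦ sq_nonneg _)
      ⟨k, Finset.mem_univ k, by have := sub_ne_zero.2 hk; positivity⟩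
  have hexp : ∑ k, (w k - a) ^ 2 = ∑ k, w k ^ 2 - (∑ k, w k) ^ 2 / Fintype.card ι := by
    simp only [sub_sq, Finset.sum_add_distrib, Finset.sum_sub_distrib, Finset.sum_const,
      Finset.card_univ, nsmul_eq_mul, ← Finset.sum_mul, ← Finset.mul_sum, a]
    field_simp
    ring
  rw [hexp, sub_pos, div_lt_iff₀ hn] at hdev
  linarith

theorem exists_sum_const_sq_eq_and_sum_lt {ι : Type*} [Fintype ι] {w : ι → ℝ} (hw : w ≠ 0)
    (h : ¬ ∃ c, 0 < c ∧ ∀ i, w i = c) :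
    ∃ c : ℝ, ∑ _ : ι, c ^ 2 = ∑ i, w i ^ 2 ∧ ∑ i, w i < ∑ _ : ι, c := by
  obtain ⟨i₀, hi₀⟩ : ∃ i, w i ≠ 0 := Function.ne_iff.1 hw
  have hn : (0 : ℝ) < Fintype.card ι := by exact_mod_cast Fintype.card_pos_iff.2 ⟨i₀⟩
  have hQ : 0 < ∑ i, w i ^ 2 :=
    Finset.sum_pos' (fun _ _ ↦ sq_nonneg _) ⟨i₀, Finset.mem_univ _, by positivity⟩
  refine ⟨√((∑ i, w i ^ 2) / Fintype.card ι), ?_, ?_⟩ <;>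
    simp only [Finset.sum_const, Finset.card_univ, nsmul_eq_mul]
  · rw [sq_sqrt (by positivity)]
    field_simp
  have hsq : (Fintype.card ι * √((∑ i, w i ^ 2) / Fintype.card ι)) ^ 2
      = Fintype.card ι * ∑ i, w i ^ 2 := by
    rw [mul_pow, sq_sqrt (by positivity)]
    field_simp
  rcases le_or_gt (∑ i, w i) 0 with hS | hS
  · exact hS.trans_lt (mul_pos hn (sqrt_pos.2 (by positivity)))
  refine lt_of_pow_lt_pow_left₀ 2 (by positivity) (hsq ▸ sq_sum_lt_card_mul_sum_sq ?_)
  by_contra! hconst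
  refine h ⟨w i₀, ?_, fun i ↦ hconst i i₀⟩
  have : ∑ i, w i = Fintype.card ι * w i₀ := by
    simp [Finset.sum_congr rfl fun i _ ↦ hconst i i₀]
  nlinarith

theorem map_pi_gaussianReal_sum_mul {ι : Type*} [Fintype ι] (m : ι → ℝ) (v : ι → ℝ≥0)
    (w : ι → ℝ) :
    (Measure.pi fun i ↦ gaussianReal (m i) (v i)).map (fun x ↦ ∑ i, w i * x i) =
      gaussianReal (∑ i, w i * m i) (∑ i, .mk (w i ^ 2) (sq_nonneg _) * v i) := by
  refine Measure.ext_of_charFun (funext fun t ↦ ?_)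
  rw [charFun_apply_real, integral_map (by fun_prop : Measurable _).aemeasurable (by fun_prop)]
  calc ∫ x, Complex.exp (t * ↑(∑ i, w i * x i) * Complex.I)
        ∂Measure.pi (fun i ↦ gaussianReal (m i) (v i))
      = ∫ x, ∏ i, Complex.exp (↑(t * w i) * ↑(x i) * Complex.I)
          ∂Measure.pi (fun i ↦ gaussianReal (m i) (v i)) := by
        simp_rw [← Complex.exp_sum]
        push_cast
        simp_rw [Finset.mul_sum, Finset.sum_mul, mul_assoc]
    _ = ∏ i, charFun (gaussianReal (m i) (v i)) (t * w i) := by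
        rw [integral_fintype_prod_eq_prod
          (fun i (y : ℝ) ↦ Complex.exp (↑(t * w i) * ↑y * Complex.I))]
        simp_rw [charFun_apply_real]
    _ = _ := by
        simp_rw [charFun_gaussianReal, ← Complex.exp_sum]
        congr 1
        push_cast
        simp only [Finset.mul_sum, Finset.sum_mul, Finset.sum_div, ← Finset.sum_sub_distrib]
        exact Finset.sum_congr rfl fun i _ ↦ by ring

theorem map_pi_const_gaussianReal_sum_mul {ι : Type*} [Fintype ι] (m : ℝ) (v : ℝ≥0)
    (w : ι → ℝ) :
    (Measure.pi fun _ : ι ↦ gaussianReal m v).map (fun x ↦ ∑ i, w i * x i) =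
      gaussianReal ((∑ i, w i) * m) (.mk (∑ i, w i ^ 2) (by positivity) * v) := by
  rw [map_pi_gaussianReal_sum_mul, Finset.sum_mul, ← Finset.sum_mul]
  congr
  ext
  simp [Finset.sum_mul]

theorem gaussianReal_setOf_add_neg (m : ℝ) (v : ℝ≥0) (b : ℝ) :
    gaussianReal m v {y | y + b < 0} = gaussianReal 0 v (Iio (-b - m)) := by
  rw [← zero_add m, ← gaussianReal_map_add_const,
    Measure.map_apply (by fun_prop) (measurableSet_lt (by fun_prop) measurable_const)]
  congr 1
  ext z
  simp only [mem_preimage, mem_ofPred_eq, mem_Iio]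
  constructor <;> intro <;> linarith

theorem gaussianReal_setOf_add_pos (m : ℝ) (v : ℝ≥0) (b : ℝ) :
    gaussianReal m v {y | y + b > 0} = gaussianReal 0 v (Iio (b + m)) := by
  rw [← sub_zero m, ← gaussianReal_map_const_sub,
    Measure.map_apply (by fun_prop) (measurableSet_lt measurable_const (by fun_prop))]
  congr 1
  ext z
  simp only [mem_preimage, mem_ofPred_eq, mem_Iio]
  constructor <;> intro <;> linarith

section HalfSpace

variable {ι : Type*} [Fintype ι] (m : ℝ) (v : ℝ≥0) (w : ι → ℝ) (b : ℝ)

theorem pi_gaussianReal_setOf_sum_mul_add_neg :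
    (Measure.pi fun _ : ι ↦ gaussianReal m v) {x | ∑ i, w i * x i + b < 0} =
      gaussianReal 0 (.mk (∑ i, w i ^ 2) (by positivity) * v) (Iio (-b - (∑ i, w i) * m)) := by
  rw [← gaussianReal_setOf_add_neg, ← map_pi_const_gaussianReal_sum_mul,
    Measure.map_apply (by fun_prop) (measurableSet_lt (by fun_prop) measurable_const)]
  rfl

theorem pi_gaussianReal_setOf_sum_mul_add_pos :
    (Measure.pi fun _ : ι ↦ gaussianReal m v) {x | ∑ i, w i * x i + b > 0} =
      gaussianReal 0 (.mk (∑ i, w i ^ 2) (by positivity) * v) (Iio (b + (∑ i, w i) * m)) := by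
  rw [← gaussianReal_setOf_add_pos, ← map_pi_const_gaussianReal_sum_mul,
    Measure.map_apply (by fun_prop) (measurableSet_lt measurable_const (by fun_prop))]
  rfl

end HalfSpace

theorem gaussianReal_Iio_strictMono (m : ℝ) {v : ℝ≥0} (hv : v ≠ 0) :
    StrictMono fun c ↦ gaussianReal m v (Iio c) := by
  intro a b hab
  have hIco : gaussianReal m v (Ico a b) ≠ 0 := fun h ↦ by
    simpa [hab.not_ge] using gaussianReal_absolutelyContinuous' m hv h
  calc gaussianReal m v (Iio a) < gaussianReal m v (Iio a) + gaussianReal m v (Ico a b) :=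
        ENNReal.lt_add_right (measure_ne_top _ _) hIco
    _ = gaussianReal m v (Iio b) := by
        rw [← measure_union ((Iio_disjoint_Ici le_rfl).mono_right Ico_subset_Ici_self)
          measurableSet_Ico, Iio_union_Ico_eq_Iio hab.le]

theorem optimal_classifier_equal_positive_weights_general
    (d : ℕ)
    (σp σm α : ℝ) (hσp : 0 < σp) (hσm : 0 < σm) (hα : α ∈ Set.Ioo (0 : ℝ) 1)
    (R : (Fin d → ℝ) → ℝ → ℝ)
    (hR : ∀ w b, R w b =
      α * ((Measure.pi fun _ : Fin d => gaussianReal 1 ⟨σp ^ 2, sq_nonneg σp⟩)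
            {x : Fin d → ℝ | (∑ i, w i * x i) + b < 0}).toReal
        + (1 - α) * ((Measure.pi fun _ : Fin d => gaussianReal (-1) ⟨σm ^ 2, sq_nonneg σm⟩)
            {x : Fin d → ℝ | (∑ i, w i * x i) + b > 0}).toReal)
    (wstar : Fin d → ℝ) (bstar : ℝ) (hwstar : wstar ≠ 0)
    (hmin : ∀ (w : Fin d → ℝ) (b : ℝ), R wstar bstar ≤ R w b) :
    ∃ c : ℝ, 0 < c ∧ ∀ i, wstar i = c := by
  by_contra hconst
  obtain ⟨c, hnorm, hsum⟩ := exists_sum_const_sq_eq_and_sum_lt hwstar hconst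
  obtain ⟨i₀, hi₀⟩ : ∃ i, wstar i ≠ 0 := Function.ne_iff.1 hwstar
  have hQ : 0 < ∑ i, wstar i ^ 2 :=
    Finset.sum_pos' (fun _ _ ↦ sq_nonneg _) ⟨i₀, Finset.mem_univ _, by positivity⟩
  have hvar (σ : ℝ) (hσ : 0 < σ) : (⟨∑ i, wstar i ^ 2, hQ.le⟩ : ℝ≥0) * ⟨σ ^ 2, sq_nonneg σ⟩ ≠ 0 :=
    mul_ne_zero (fun h ↦ hQ.ne' congr(($h : ℝ))) (fun h ↦ (pow_pos hσ 2).ne' congr(($h : ℝ)))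
  have hneg := gaussianReal_Iio_strictMono 0 (hvar σp hσp)
    (show -bstar - (∑ _ : Fin d, c) * 1 < -bstar - (∑ i, wstar i) * 1 by linarith)
  have hpos := gaussianReal_Iio_strictMono 0 (hvar σm hσm)
    (show bstar + (∑ _ : Fin d, c) * -1 < bstar + (∑ i, wstar i) * -1 by linarith)
  refine (hmin (fun _ ↦ c) bstar).not_gt ?_
  rw [hR, hR]
  -- the variances in `hR` elaborate as `Subtype.mk`, so the lemmas must be instantiated by hand
  simp only [pi_gaussianReal_setOf_sum_mul_add_neg (ι := Fin d) 1 ⟨σp ^ 2, sq_nonneg σp⟩,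
    pi_gaussianReal_setOf_sum_mul_add_pos (ι := Fin d) (-1) ⟨σm ^ 2, sq_nonneg σm⟩,
    show (.mk (∑ _ : Fin d, c ^ 2) (by positivity) : ℝ≥0) = .mk (∑ i, wstar i ^ 2) hQ.le
      from NNReal.eq hnorm]
  exact add_lt_add
    (mul_lt_mul_of_pos_left (ENNReal.toReal_strict_mono (measure_ne_top _ _) hneg) hα.1)
    (mul_lt_mul_of_pos_left (ENNReal.toReal_strict_mono (measure_ne_top _ _) hpos)
      (sub_pos.2 hα.2))

/-- Any nonzero global minimizer of the misclassification risk on the two-class spherical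
Gaussian mixture has all weight coordinates equal and positive. -/
theorem optimal_classifier_equal_positive_weights
    (d : ℕ) (hd : 1 ≤ d)
    (σp σm α : ℝ) (hσp : 0 < σp) (hσm : 0 < σm) (hα : α ∈ Set.Ioo (0 : ℝ) 1)
    (R : (Fin d → ℝ) → ℝ → ℝ)
    (hR : ∀ w b, R w b =
      α * ((Measure.pi fun _ : Fin d => gaussianReal 1 ⟨σp ^ 2, sq_nonneg σp⟩)
            {x : Fin d → ℝ | (∑ i, w i * x i) + b < 0}).toReal
        + (1 - α) * ((Measure.pi fun _ : Fin d => gaussianReal (-1) ⟨σm ^ 2, sq_nonneg σm⟩)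
            {x : Fin d → ℝ | (∑ i, w i * x i) + b > 0}).toReal)
    (wstar : Fin d → ℝ) (bstar : ℝ) (hwstar : wstar ≠ 0)
    (hmin : ∀ (w : Fin d → ℝ) (b : ℝ), R wstar bstar ≤ R w b) :
    ∃ c : ℝ, 0 < c ∧ ∀ i, wstar i = c :=
  optimal_classifier_equal_positive_weights_general d σp σm α hσp hσm hα R hR wstar bstar hwstar
    hmin
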